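/- arXiv:1110.3589 — 7 statements merged into one kernel-verified Lean document; each statement's English description precedes it below -/
import Mathlib

section
/- Let p be a positive integer and α_1, …, α_p ∈ ℂ[[y]]. Let D be a positive integer such that for every θ ∈ ℂ with θ^D = 1 the rescaling substitution y ↦ θy (sending Σ_j a_j y^j to Σ_j a_j θ^j y^j) permutes the multiset [α_1, …, α_p]. Fix k ∈ {1,…,p} and a positive integer h, and let e be a positive divisor of D that divides every exponent appearing in the support of the truncation λ = Σ_{e'<h} coeff_{e'}(α_k) y^{e'}. Set n = e / gcd(e, h). If D divides q(B) = Σ_{i=1}^p min(h, O(α_k, α_i)), then there exists a polynomial G ∈ ℂ[z] such that F_B(z) = G(z^n) as polynomials, where F_B(z) = ∏_{i ∈ S}(z − coeff_h(α_i)) and S = {i : O(α_i, α_k) ≥ h}. -/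
/-!
Let `θ` be a primitive `e`-th root of unity. The substitution `y ↦ θy` permutes the `α_i` by some
`σ` and fixes `α_k` below degree `h`, so `σ` preserves `S` and the truncated contacts
`N_i = min(h, O(α_k, α_i))`. For `i ∉ S`, `σ` multiplies the leading coefficient of `α_k - α_i` by
`θ ^ N_i`; comparing products gives `e ∣ ∑_{i ∉ S} N_i`, hence `e ∣ |S| h` because `e ∣ D ∣ q(B)`.
So `ζ = θ ^ h`, a primitive `n`-th root of unity, satisfies `ζ ^ |S| = 1` and permutes the roots
`coeff_h α_i` of `F_B` by multiplication. Therefore `F_B(ζz) = F_B(z)`, and only powers of `z`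
divisible by `n` occur in `F_B`.
-/

open Finset

namespace PowerSeries

variable {R : Type*}

lemma min_order_le_min_order [Semiring R] {f g : R⟦X⟧} {h : ℕ}
    (H : ∀ m < h, coeff m f = 0 → coeff m g = 0) :
    min (h : ℕ∞) f.order ≤ min (h : ℕ∞) g.order :=
  le_min (min_le_left _ _) <| le_order _ _ fun m hm =>
    H m (by exact_mod_cast hm.trans_le (min_le_left _ _))
      (coeff_of_lt_order m (hm.trans_le (min_le_right _ _)))

lemma min_order_eq_min_order [Semiring R] {f g : R⟦X⟧} {h : ℕ}
    (H : ∀ m < h, coeff m f = 0 ↔ coeff m g = 0) :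
    min (h : ℕ∞) f.order = min (h : ℕ∞) g.order :=
  (min_order_le_min_order fun m hm => (H m hm).1).antisymm
    (min_order_le_min_order fun m hm => (H m hm).2)

lemma order_sub_comm [Ring R] (f g : R⟦X⟧) : (f - g).order = (g - f).order := by
  rw [← neg_sub, order_neg]

lemma toNat_order_lt_of_order_lt [Semiring R] {f : R⟦X⟧} {h : ℕ} (hf : f.order < h) :
    f.order.toNat < h := by
  rwa [← ENat.natCast_toNat hf.ne_top, Nat.cast_lt] at hf

lemma coeff_toNat_order_ne_zero_of_order_lt [Semiring R] {f : R⟦X⟧} {h : ℕ} (hf : f.order < h) :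
    coeff f.order.toNat f ≠ 0 :=
  coeff_order fun hf0 => by simp [hf0] at hf

lemma coeff_sub_rescale_of_lt [CommRing R] {f g : R⟦X⟧} {θ : R} {e h m : ℕ} (hθ : θ ^ e = 1)
    (hf : ∀ j < h, coeff j f ≠ 0 → e ∣ j) (hm : m < h) :
    coeff m (f - rescale θ g) = θ ^ m * coeff m (f - g) := by
  have hfix : θ ^ m * coeff m f = coeff m f := by
    by_cases hc : coeff m f = 0
    · rw [hc, mul_zero]
    · obtain ⟨c, rfl⟩ := hf m hm hc
      rw [pow_mul, hθ, one_pow, one_mul]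
  rw [map_sub, map_sub, coeff_rescale, mul_sub, hfix]

lemma min_order_sub_rescale [CommRing R] [NoZeroDivisors R] {f g : R⟦X⟧} {θ : R} {e h : ℕ}
    (hθ : θ ^ e = 1) (hθ0 : θ ≠ 0) (hf : ∀ j < h, coeff j f ≠ 0 → e ∣ j) :
    min (h : ℕ∞) (f - rescale θ g).order = min (h : ℕ∞) (f - g).order :=
  min_order_eq_min_order fun m hm => by
    rw [coeff_sub_rescale_of_lt hθ hf hm, mul_eq_zero_iff_left (pow_ne_zero m hθ0)]

end PowerSeries

lemma Finset.pow_sum_eq_one_of_perm {ι M : Type*} [CommMonoidWithZero M] [IsCancelMulZero M]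
    [Nontrivial M] {s : Finset ι} {σ : Equiv.Perm ι} (hs : ∀ i, i ∈ s ↔ σ i ∈ s) {c : ι → M}
    (hc : ∀ i ∈ s, c i ≠ 0) {θ : M} {N : ι → ℕ} (hcσ : ∀ i ∈ s, c (σ i) = θ ^ N i * c i) :
    θ ^ ∑ i ∈ s, N i = 1 := by
  have hprod : ∏ i ∈ s, c (σ i) = ∏ i ∈ s, c i := prod_equiv σ hs fun _ _ => rfl
  rw [prod_congr rfl hcσ, prod_mul_distrib, prod_pow_eq_pow_sum] at hprod
  exact (mul_eq_right₀ (prod_ne_zero_iff.mpr hc)).mp hprod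

lemma IsPrimitiveRoot.pow_div_gcd {M : Type*} [CommMonoid M] {ζ : M} {k : ℕ}
    (hζ : IsPrimitiveRoot ζ k) (hk : k ≠ 0) (i : ℕ) : IsPrimitiveRoot (ζ ^ i) (k / k.gcd i) := by
  rcases eq_or_ne i 0 with rfl | hi
  · simp [Nat.div_self (Nat.pos_of_ne_zero hk)]
  · rw [IsPrimitiveRoot.iff_orderOf, orderOf_pow' ζ hi, ← hζ.eq_orderOf]

namespace Polynomial

variable {ι R : Type*} [CommRing R]

lemma prod_X_sub_C_comp_C_mul_X {s : Finset ι} {σ : Equiv.Perm ι} (hs : ∀ i, i ∈ s ↔ σ i ∈ s)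
    {a : ι → R} {ζ : R} (ha : ∀ i ∈ s, a (σ i) = ζ * a i) (hζ : ζ ^ #s = 1) :
    (∏ i ∈ s, (X - C (a i))).comp (C ζ * X) = ∏ i ∈ s, (X - C (a i)) := calc
  _ = ∏ i ∈ s, (C ζ * X - C (a (σ i))) := by
        simp only [prod_comp, sub_comp, X_comp, C_comp]
        exact (prod_equiv σ hs fun _ _ => rfl).symm
  _ = ∏ i ∈ s, C ζ * (X - C (a i)) := prod_congr rfl fun i hi => by rw [ha i hi, C_mul, mul_sub]
  _ = _ := by rw [prod_mul_distrib, prod_const, ← C_pow, hζ, C_1, one_mul]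

lemma expand_contract_of_comp_C_mul_X_eq [IsDomain R] {f : R[X]} {ζ : R} {n : ℕ}
    (hζ : IsPrimitiveRoot ζ n) (hn : n ≠ 0) (hf : f.comp (C ζ * X) = f) :
    expand R n (contract n f) = f := by
  ext m
  rw [coeff_expand (Nat.pos_of_ne_zero hn), coeff_contract hn]
  split_ifs with hm
  · rw [Nat.div_mul_cancel hm]
  · have hfix : f.coeff m * ζ ^ m = f.coeff m := by rw [← comp_C_mul_X_coeff, hf]
    by_contra hm0
    exact hm (hζ.pow_eq_one_iff_dvd m |>.mp ((mul_eq_left₀ (Ne.symm hm0)).mp hfix))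

end Polynomial

section RescalingPermutation

open PowerSeries

variable {K ι : Type*} [CommRing K] [IsDomain K] {α : ι → K⟦X⟧}
  {σ : Equiv.Perm ι} {θ : K} {k : ι} {e h : ℕ}

lemma min_order_sub_perm (hθ : θ ^ e = 1) (hθ0 : θ ≠ 0) (hσ : ∀ i, rescale θ (α i) = α (σ i))
    (hsupp : ∀ j < h, coeff j (α k) ≠ 0 → e ∣ j) (i : ι) :
    min (h : ℕ∞) (α k - α (σ i)).order = min (h : ℕ∞) (α k - α i).order := by
  rw [← hσ]
  exact min_order_sub_rescale hθ hθ0 hsupp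

lemma le_order_sub_perm_iff (hθ : θ ^ e = 1) (hθ0 : θ ≠ 0)
    (hσ : ∀ i, rescale θ (α i) = α (σ i)) (hsupp : ∀ j < h, coeff j (α k) ≠ 0 → e ∣ j) (i : ι) :
    (h : ℕ∞) ≤ (α (σ i) - α k).order ↔ (h : ℕ∞) ≤ (α i - α k).order := by
  rw [order_sub_comm, order_sub_comm (α i), ← min_eq_left_iff, ← min_eq_left_iff,
    min_order_sub_perm hθ hθ0 hσ hsupp]

lemma dvd_card_mul_of_dvd_sum_min_order [Fintype ι] (hθ : IsPrimitiveRoot θ e) (he : e ≠ 0)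
    (hσ : ∀ i, rescale θ (α i) = α (σ i)) (hsupp : ∀ j < h, coeff j (α k) ≠ 0 → e ∣ j)
    (hq : e ∣ ∑ i, (min (h : ℕ∞) (α k - α i).order).toNat) :
    e ∣ #(univ.filter fun i => (h : ℕ∞) ≤ (α i - α k).order) * h := by
  have hθ0 := hθ.ne_zero he
  set N : ι → ℕ := fun i => (min (h : ℕ∞) (α k - α i).order).toNat
  have hNS : ∀ i ∈ univ.filter fun i => (h : ℕ∞) ≤ (α i - α k).order, N i = h := by
    intro i hi
    rw [mem_filter, order_sub_comm] at hi
    simp [N, min_eq_left hi.2]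
  have hlt : ∀ i ∈ univ.filter fun i => ¬(h : ℕ∞) ≤ (α i - α k).order,
      (α k - α i).order < h ∧ N i = (α k - α i).order.toNat := by
    intro i hi
    rw [mem_filter, order_sub_comm, not_le] at hi
    exact ⟨hi.2, by simp [N, min_eq_right hi.2.le]⟩
  have hcompl : e ∣ ∑ i ∈ univ.filter fun i => ¬(h : ℕ∞) ≤ (α i - α k).order, N i := by
    rw [← hθ.pow_eq_one_iff_dvd]
    refine pow_sum_eq_one_of_perm (σ := σ) (c := fun i => coeff (N i) (α k - α i)) (fun i => ?_)
      (fun i hi => ?_) (fun i hi => ?_)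
    · simp only [mem_filter, mem_univ, true_and, le_order_sub_perm_iff hθ.pow_eq_one hθ0 hσ hsupp]
    · obtain ⟨hi, hN⟩ := hlt i hi
      simpa [hN] using coeff_toNat_order_ne_zero_of_order_lt hi
    · obtain ⟨hi, hN⟩ := hlt i hi
      have hNσ : N (σ i) = N i :=
        congrArg ENat.toNat (min_order_sub_perm hθ.pow_eq_one hθ0 hσ hsupp i)
      simp only [hNσ, ← hσ]
      exact coeff_sub_rescale_of_lt hθ.pow_eq_one hsupp (hN ▸ toNat_order_lt_of_order_lt hi)
  rw [← sum_filter_add_sum_filter_not univ fun i => (h : ℕ∞) ≤ (α i - α k).order,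
    sum_congr rfl hNS, sum_const, smul_eq_mul] at hq
  exact (Nat.dvd_add_left hcompl).mp hq

end RescalingPermutation

open Polynomial

theorem stmt_0_general (p : ℕ) (α : Fin p → PowerSeries ℂ)
    (D : ℕ)
    (hperm : ∀ θ : ℂ, θ ^ D = 1 →
      ∃ σ : Equiv.Perm (Fin p), ∀ i, PowerSeries.rescale θ (α i) = α (σ i))
    (k : Fin p) (h : ℕ)
    (e : ℕ) (he : 0 < e) (heD : e ∣ D)
    (hsupp : ∀ e' < h, PowerSeries.coeff e' (α k) ≠ 0 → e ∣ e')
    (n : ℕ) (hn : n = e / Nat.gcd e h)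
    (hq : D ∣ ∑ i, (min (h : ℕ∞) ((α k - α i).order)).toNat) :
    ∃ G : Polynomial ℂ,
      (∏ i ∈ Finset.univ.filter fun i => (h : ℕ∞) ≤ (α i - α k).order,
          (Polynomial.X - Polynomial.C (PowerSeries.coeff h (α i))))
        = G.comp (Polynomial.X ^ n) := by
  set S := Finset.univ.filter fun i => (h : ℕ∞) ≤ (α i - α k).order
  obtain ⟨θ, hθ⟩ : ∃ θ : ℂ, IsPrimitiveRoot θ e := ⟨_, Complex.isPrimitiveRoot_exp e he.ne'⟩
  obtain ⟨σ, hσ⟩ := hperm θ ((hθ.pow_eq_one_iff_dvd D).mpr heD)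
  have hSh : e ∣ #S * h := dvd_card_mul_of_dvd_sum_min_order hθ he.ne' hσ hsupp (heD.trans hq)
  have hζ : IsPrimitiveRoot (θ ^ h) n := hn ▸ hθ.pow_div_gcd he.ne' h
  have hF : (∏ i ∈ S, (X - C (PowerSeries.coeff h (α i)))).comp (C (θ ^ h) * X)
      = ∏ i ∈ S, (X - C (PowerSeries.coeff h (α i))) := by
    refine prod_X_sub_C_comp_C_mul_X (σ := σ) (fun i => ?_) (fun i _ => ?_) ?_
    · simp only [S, mem_filter, mem_univ, true_and,
        le_order_sub_perm_iff hθ.pow_eq_one (hθ.ne_zero he.ne') hσ hsupp]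
    · rw [← hσ, PowerSeries.coeff_rescale]
    · rwa [← pow_mul, hθ.pow_eq_one_iff_dvd, mul_comm]
  have hn0 : n ≠ 0 := hn ▸ (Nat.div_pos (Nat.gcd_le_left h he) (Nat.gcd_pos_of_pos_left h he)).ne'
  exact ⟨contract n _,
    by rw [← expand_eq_comp_X_pow, expand_contract_of_comp_C_mul_X_eq hζ hn0 hF]⟩

/-- Theorem 4 of the paper (in cleared-denominator form): if the conjugation action
`y ↦ θy` (for `θ^D = 1`) permutes the roots `α_1, …, α_p`, the truncation
`λ_B` of `α_k` below `h` has support divisible by `e ∣ D`, `n = e / gcd(e, h)`, and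
`D` divides `q(B)`, then `F_B(z) = ∏_{i : O(α_i,α_k) ≥ h} (z - coeff_h α_i)` is a
polynomial in `z^n`. -/
theorem stmt_0 (p : ℕ) (hp : 1 ≤ p) (α : Fin p → PowerSeries ℂ)
    (D : ℕ) (hD : 0 < D)
    (hperm : ∀ θ : ℂ, θ ^ D = 1 →
      ∃ σ : Equiv.Perm (Fin p), ∀ i, PowerSeries.rescale θ (α i) = α (σ i))
    (k : Fin p) (h : ℕ) (hh : 0 < h)
    (e : ℕ) (he : 0 < e) (heD : e ∣ D)
    (hsupp : ∀ e' < h, PowerSeries.coeff e' (α k) ≠ 0 → e ∣ e')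
    (n : ℕ) (hn : n = e / Nat.gcd e h)
    (hq : D ∣ ∑ i, (min (h : ℕ∞) ((α k - α i).order)).toNat) :
    ∃ G : Polynomial ℂ,
      (∏ i ∈ Finset.univ.filter fun i => (h : ℕ∞) ≤ (α i - α k).order,
          (Polynomial.X - Polynomial.C (PowerSeries.coeff h (α i))))
        = G.comp (Polynomial.X ^ n) :=
  stmt_0_general p α D hperm k h e he heD hsupp n hn hq
end

section
/- Let p ≥ 2 and let α_1, …, α_p, β_1, …, β_{p−1} ∈ ℂ[[y]] be such that f = ∏_{i=1}^p (X − α_i) ∈ ℂ[[y]][X] has derivative (with respect to X) equal to p · ∏_{j=1}^{p−1} (X − β_j). Then for every j ∈ {1, …, p−1} there exist indices k, l ∈ {1, …, p} such that O(α_k, β_j) = O(α_l, β_j) = O(α_k, α_l) = max_{i=1,…,p} O(α_i, β_j), where the maximum and the contact orders are taken in ℕ ∪ {∞}. -/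
/-!
Evaluating `f' = ∑ᵢ ∏_{m ≠ i} (X - αₘ)` at `β` gives `∑ᵢ ∏_{m ≠ i} (β - αₘ) = 0`, i.e.
`∑ᵢ 1/(β - αᵢ) = 0` when `β` is not a root of `f`. Let `M` be the largest order of the `β - αᵢ`
and `cᵢ` their lowest coefficients. The coefficient of lowest possible degree in the identity
gives `∑_{ord(β - αᵢ) = M} cᵢ⁻¹ = 0`; in characteristic zero a nonempty sum of equal nonzero terms
does not vanish, so two of these indices `k, l` have `c_k ≠ c_l`, and then `α_k - α_l` has order
exactly `M`.
-/

open Finset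

theorem Finset.exists_ne_of_sum_eq_zero {ι M : Type*} [AddCommMonoid M] [Module.IsTorsionFree ℕ M]
    {s : Finset ι} {f : ι → M} (hs : s.Nonempty) (hf : ∀ i ∈ s, f i ≠ 0)
    (h : ∑ i ∈ s, f i = 0) : ∃ k ∈ s, ∃ l ∈ s, f k ≠ f l := by
  by_contra! hconst
  obtain ⟨i, hi⟩ := hs
  rw [sum_eq_card_nsmul fun k hk => hconst k hk i hi] at h
  exact smul_ne_zero (card_ne_zero_of_mem hi) (hf i hi) h

theorem Polynomial.eval_derivative_prod_X_sub_C {R ι : Type*} [CommRing R] [DecidableEq ι]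
    (s : Finset ι) (a : ι → R) (b : R) :
    (derivative (∏ i ∈ s, (X - C (a i)))).eval b = ∑ i ∈ s, ∏ m ∈ s.erase i, (b - a m) := by
  simp [derivative_prod_finset, eval_finsetSum, eval_prod]

namespace PowerSeries

section CommSemiring

variable {R : Type*} [CommSemiring R]

theorem X_pow_dvd_of_le_order {φ : R⟦X⟧} {n : ℕ} (h : ↑n ≤ φ.order) : X ^ n ∣ φ :=
  X_pow_dvd_iff.2 fun d hd => coeff_of_lt_order d (lt_of_lt_of_le (by exact_mod_cast hd) h)

theorem coeff_mul_of_le_order {φ ψ : R⟦X⟧} {a b : ℕ} (ha : ↑a ≤ φ.order) (hb : ↑b ≤ ψ.order) :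
    coeff (a + b) (φ * ψ) = coeff a φ * coeff b ψ := by
  obtain ⟨φ', rfl⟩ := X_pow_dvd_of_le_order ha
  obtain ⟨ψ', rfl⟩ := X_pow_dvd_of_le_order hb
  rw [mul_mul_mul_comm, ← pow_add]
  simp [coeff_X_pow_mul']

theorem natCast_sum_le_order_prod {ι : Type*} {s : Finset ι} {φ : ι → R⟦X⟧} {n : ι → ℕ}
    (hn : ∀ i ∈ s, ↑(n i) ≤ (φ i).order) : ↑(∑ i ∈ s, n i) ≤ (∏ i ∈ s, φ i).order :=
  calc (↑(∑ i ∈ s, n i) : ℕ∞) = ∑ i ∈ s, (n i : ℕ∞) := Nat.cast_sum s n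
    _ ≤ ∑ i ∈ s, (φ i).order := sum_le_sum hn
    _ ≤ _ := le_order_prod φ s

theorem coeff_prod_of_le_order {ι : Type*} [DecidableEq ι] {s : Finset ι} {φ : ι → R⟦X⟧} {n : ι → ℕ}
    (hn : ∀ i ∈ s, ↑(n i) ≤ (φ i).order) :
    coeff (∑ i ∈ s, n i) (∏ i ∈ s, φ i) = ∏ i ∈ s, coeff (n i) (φ i) := by
  induction s using Finset.induction_on with
  | empty => simp
  | insert i s hi ih =>
    rw [sum_insert hi, prod_insert hi, prod_insert hi, ← ih fun m hm => hn m (mem_insert_of_mem hm)]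
    exact coeff_mul_of_le_order (hn i (mem_insert_self i s))
      (natCast_sum_le_order_prod fun m hm => hn m (mem_insert_of_mem hm))

theorem coeff_sum_prod_erase {ι : Type*} [Fintype ι] [DecidableEq ι] {φ : ι → R⟦X⟧} {n : ι → ℕ}
    (hn : ∀ i, ↑(n i) ≤ (φ i).order) {i₀ : ι} (hi₀ : ∀ i, n i ≤ n i₀) :
    coeff (∑ m ∈ univ.erase i₀, n m) (∑ i, ∏ m ∈ univ.erase i, φ m) =
      ∑ i with n i = n i₀, ∏ m ∈ univ.erase i, coeff (n m) (φ m) := by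
  have hsplit (k : ι) : n k + ∑ m ∈ univ.erase k, n m = ∑ m, n m :=
    add_sum_erase _ _ (mem_univ k)
  rw [map_sum, sum_filter]
  refine sum_congr rfl fun i _ => ?_
  split_ifs with hi
  · rw [show ∑ m ∈ univ.erase i₀, n m = ∑ m ∈ univ.erase i, n m by
      have := hsplit i; have := hsplit i₀; omega]
    exact coeff_prod_of_le_order fun m _ => hn m
  · refine coeff_of_lt_order _ (lt_of_lt_of_le ?_ (natCast_sum_le_order_prod fun m _ => hn m))
    have := hsplit i; have := hsplit i₀; have := hi₀ i
    exact_mod_cast (by omega : ∑ m ∈ univ.erase i₀, n m < ∑ m ∈ univ.erase i, n m)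

end CommSemiring

theorem order_sub_eq_of_coeff_ne {R : Type*} [Ring R] {φ ψ : R⟦X⟧} {n : ℕ} (hφ : φ.order = n)
    (hψ : ψ.order = n) (h : coeff n φ ≠ coeff n ψ) : (φ - ψ).order = n := by
  refine order_eq_nat.2 ⟨by simpa [sub_eq_zero] using h, fun i hi => ?_⟩
  simp [coeff_of_lt_order i (by rw [hφ]; exact_mod_cast hi),
    coeff_of_lt_order i (by rw [hψ]; exact_mod_cast hi)]

theorem exists_order_sub_eq_sup_of_sum_prod_erase_eq_zero {K ι : Type*} [Field K] [CharZero K]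
    [Fintype ι] [DecidableEq ι] [Nonempty ι] {φ : ι → K⟦X⟧}
    (h : ∑ i, ∏ m ∈ univ.erase i, φ m = 0) :
    ∃ k l, (φ k).order = univ.sup (fun i => (φ i).order) ∧
      (φ l).order = univ.sup (fun i => (φ i).order) ∧
      (φ k - φ l).order = univ.sup (fun i => (φ i).order) := by
  obtain ⟨i₀, -, hi₀⟩ := exists_mem_eq_sup univ univ_nonempty fun i => (φ i).order
  rw [hi₀]
  by_cases hzero : ∃ k, φ k = 0
  · obtain ⟨k, hk⟩ := hzero
    have htop : (φ i₀).order = ⊤ := by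
      refine top_unique (hi₀ ▸ ?_)
      calc ⊤ = (φ k).order := by rw [hk, order_zero]
        _ ≤ _ := le_sup (f := fun i => (φ i).order) (mem_univ k)
    exact ⟨k, k, by simp [hk, htop]⟩
  push Not at hzero
  set n : ι → ℕ := fun i => (φ i).order.toNat
  have hn (i : ι) : (φ i).order = n i := (coe_toNat_order (hzero i)).symm
  have hmax (i : ι) : n i ≤ n i₀ := by
    have := le_sup (f := fun i => (φ i).order) (mem_univ i)
    rwa [hi₀, hn, hn, Nat.cast_le] at this
  set c : ι → K := fun i => coeff (n i) (φ i)
  have hc (i : ι) : c i ≠ 0 := coeff_order (hzero i)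
  have hprod : ∑ i with n i = n i₀, ∏ m ∈ univ.erase i, c m = 0 := by
    rw [← coeff_sum_prod_erase (fun i => (hn i).ge) hmax, h, map_zero]
  have hinv : ∑ i with n i = n i₀, (c i)⁻¹ = 0 := by
    have hprod_erase (i : ι) : ∏ m ∈ univ.erase i, c m = (∏ m, c m) * (c i)⁻¹ :=
      (eq_mul_inv_iff_mul_eq₀ (hc i)).2 (prod_erase_mul _ _ (mem_univ i))
    simpa [hprod_erase, ← mul_sum, prod_ne_zero_iff.2 fun i _ => hc i] using hprod
  obtain ⟨k, hk, l, hl, hkl⟩ := exists_ne_of_sum_eq_zero ⟨i₀, by simp⟩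
    (fun i _ => inv_ne_zero (hc i)) hinv
  simp only [mem_filter, mem_univ, true_and] at hk hl
  have hkS : (φ k).order = n i₀ := by rw [hn, hk]
  have hlS : (φ l).order = n i₀ := by rw [hn, hl]
  refine ⟨k, l, by rw [hkS, hn], by rw [hlS, hn], ?_⟩
  rw [hn, order_sub_eq_of_coeff_ne hkS hlS (by simpa [c, hk, hl] using hkl)]

end PowerSeries

open PowerSeries in
theorem stmt_1_general (p : ℕ) (α : Fin p → PowerSeries ℂ)
    (β : Fin (p - 1) → PowerSeries ℂ)
    (hder : Polynomial.derivative (∏ i, (Polynomial.X - Polynomial.C (α i)))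
      = (p : Polynomial (PowerSeries ℂ)) * ∏ j, (Polynomial.X - Polynomial.C (β j))) :
    ∀ j : Fin (p - 1), ∃ k l : Fin p,
      (α k - β j).order = Finset.univ.sup (fun i => (α i - β j).order) ∧
      (α l - β j).order = Finset.univ.sup (fun i => (α i - β j).order) ∧
      (α k - α l).order = Finset.univ.sup (fun i => (α i - β j).order) := by
  intro j
  have : Nonempty (Fin p) := ⟨⟨0, by have := j.isLt; omega⟩⟩
  have hroot : ∑ i, ∏ m ∈ univ.erase i, (β j - α m) = 0 := by
    rw [← Polynomial.eval_derivative_prod_X_sub_C, hder, Polynomial.eval_mul,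
      Polynomial.eval_prod, prod_eq_zero (mem_univ j) (by simp), mul_zero]
  obtain ⟨k, l, hk, hl, hkl⟩ := exists_order_sub_eq_sup_of_sum_prod_erase_eq_zero hroot
  simp only [← neg_sub (β j), order_neg] at hk hl ⊢
  refine ⟨l, k, hl, hk, ?_⟩
  rwa [show α l - α k = (β j - α k) - (β j - α l) by ring]

open PowerSeries in
/-- Corollary 2 of the paper (part of Lemma 3.3 of Kuo–Lu): for every Newton–Puiseux
root `β_j` of `∂f/∂x` there are two roots `α_k`, `α_l` of `f` realizing, together with
each other, the maximal contact of `β_j` with the roots of `f`. -/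
theorem stmt_1 (p : ℕ) (hp : 2 ≤ p) (α : Fin p → PowerSeries ℂ)
    (β : Fin (p - 1) → PowerSeries ℂ)
    (hder : Polynomial.derivative (∏ i, (Polynomial.X - Polynomial.C (α i)))
      = (p : Polynomial (PowerSeries ℂ)) * ∏ j, (Polynomial.X - Polynomial.C (β j))) :
    ∀ j : Fin (p - 1), ∃ k l : Fin p,
      (α k - β j).order = Finset.univ.sup (fun i => (α i - β j).order) ∧
      (α l - β j).order = Finset.univ.sup (fun i => (α i - β j).order) ∧
      (α k - α l).order = Finset.univ.sup (fun i => (α i - β j).order) :=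
  stmt_1_general p α β hder
end

section
/- Let p ≥ 2 and let α_1, …, α_p, β_1, …, β_{p−1} ∈ ℂ[[y]] be such that f = ∏_{i=1}^p (X − α_i) ∈ ℂ[[y]][X] has derivative (with respect to X) equal to p · ∏_{j=1}^{p−1} (X − β_j). Fix k ∈ {1,…,p} and a positive integer h, and set S = {i : O(α_i, α_k) ≥ h} and T = {j : O(β_j, α_k) ≥ h}. Then there is a nonzero constant c ∈ ℂ such that the derivative of the one-variable polynomial ∏_{i∈S} (z − coeff_h(α_i)) equals c · ∏_{j∈T} (z − coeff_h(β_j)); in particular the cardinality of T equals the cardinality of S minus 1. -/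
/-!
Substitute `X = λ + z y^h` into `f`, where `λ` is the truncation of `α_k` below `h`, and regard
the result as a power series in `y` with coefficients in `ℂ[z]`. A factor `X - γ` becomes
`y^h (z - coeff_h γ) + …` when `O(γ, α_k) ≥ h`, and `y^o u + …` with `o < h`, `u ∈ ℂ^×` otherwise.
Hence the lowest-order term of `∂_z f(λ + z y^h)` is `y^M c₀ F_B'(z)` (nonzero since `k ∈ S`),
while by the chain rule `∂_z f(λ + z y^h) = p y^h ∏ (λ + z y^h - β_j)` has lowest-order term
`y^(h+N) p c₁ ∏_{j ∈ T} (z - coeff_h β_j)`. Comparing the two gives the identity, and comparing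
degrees gives `#T = #S - 1`.
-/

namespace Polynomial

variable {R : Type*} [CommRing R]

/-- `F = C (y ^ n) * P` with `P ≡ g` modulo `y`: for `g ≠ 0`, `y ^ n g` is the lowest-order term
of `F` seen as a power series in `y` with coefficients in `R[X]`. -/
def HasInitialForm (F : (PowerSeries R)[X]) (n : ℕ) (g : R[X]) : Prop :=
  ∃ P : (PowerSeries R)[X], F = C (PowerSeries.X ^ n) * P ∧ P.map PowerSeries.constantCoeff = g

theorem hasInitialForm_C (a : PowerSeries R) :
    HasInitialForm (C a) 0 (C (PowerSeries.constantCoeff a)) :=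
  ⟨C a, by simp, map_C _⟩

theorem hasInitialForm_C_X_pow (n : ℕ) :
    HasInitialForm (C (PowerSeries.X ^ n : PowerSeries R)) n 1 :=
  ⟨1, (mul_one _).symm, Polynomial.map_one _⟩

namespace HasInitialForm

variable {F G : (PowerSeries R)[X]} {m n : ℕ} {f g : R[X]}

theorem mul (hF : HasInitialForm F m f) (hG : HasInitialForm G n g) :
    HasInitialForm (F * G) (m + n) (f * g) := by
  obtain ⟨P, rfl, rfl⟩ := hF
  obtain ⟨Q, rfl, rfl⟩ := hG
  exact ⟨P * Q, by rw [pow_add, C_mul]; ring, Polynomial.map_mul _⟩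

theorem prod {ι : Type*} {s : Finset ι} {F : ι → (PowerSeries R)[X]} {n : ι → ℕ}
    {g : ι → R[X]} (hF : ∀ i ∈ s, HasInitialForm (F i) (n i) (g i)) :
    HasInitialForm (∏ i ∈ s, F i) (∑ i ∈ s, n i) (∏ i ∈ s, g i) := by
  induction s using Finset.cons_induction with
  | empty => exact ⟨1, by simp, Polynomial.map_one _⟩
  | cons a s ha ih =>
    rw [Finset.prod_cons, Finset.sum_cons, Finset.prod_cons]
    exact (hF a (Finset.mem_cons_self a s)).mul (ih fun i hi => hF i (Finset.mem_cons_of_mem hi))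

protected theorem derivative (hF : HasInitialForm F n f) :
    HasInitialForm (derivative F) n (derivative f) := by
  obtain ⟨P, rfl, rfl⟩ := hF
  exact ⟨derivative P, derivative_C_mul _ _, (derivative_map P _).symm⟩

theorem eq_zero_of_lt [IsDomain R] (hf : HasInitialForm F m f) (hg : HasInitialForm F n g)
    (hmn : m < n) : f = 0 := by
  obtain ⟨P, rfl, rfl⟩ := hf
  obtain ⟨Q, hPQ, rfl⟩ := hg
  obtain ⟨d, rfl⟩ := Nat.exists_eq_add_of_le hmn.le
  have hX : (C (PowerSeries.X ^ m) : (PowerSeries R)[X]) ≠ 0 :=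
    C_ne_zero.2 (pow_ne_zero _ PowerSeries.X_ne_zero)
  have hP : P = C (PowerSeries.X ^ d) * Q := by
    rw [pow_add, C_mul, mul_assoc] at hPQ
    exact mul_left_cancel₀ hX hPQ
  rw [hP, Polynomial.map_mul, map_C, map_pow, PowerSeries.constantCoeff_X,
    zero_pow (by omega), C_0, zero_mul]

theorem unique [IsDomain R] (hf : HasInitialForm F m f) (hg : HasInitialForm F n g)
    (hf0 : f ≠ 0) (hg0 : g ≠ 0) : f = g := by
  rcases lt_trichotomy m n with hmn | rfl | hmn
  · exact absurd (hf.eq_zero_of_lt hg hmn) hf0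
  · obtain ⟨P, rfl, rfl⟩ := hf
    obtain ⟨Q, hPQ, rfl⟩ := hg
    rw [mul_left_cancel₀ (by simp) hPQ]
  · exact absurd (hg.eq_zero_of_lt hf hmn) hg0

end HasInitialForm

end Polynomial

namespace PowerSeries

variable {R : Type*} [CommRing R]

theorem exists_eq_X_pow_mul_of_coeff_eq_zero {φ : PowerSeries R} {n : ℕ}
    (hφ : ∀ m < n, coeff m φ = 0) : ∃ ψ, φ = X ^ n * ψ ∧ constantCoeff ψ = coeff n φ := by
  obtain ⟨ψ, rfl⟩ := X_pow_dvd_iff.2 hφ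
  refine ⟨ψ, rfl, ?_⟩
  rw [coeff_X_pow_mul', if_pos le_rfl, Nat.sub_self, coeff_zero_eq_constantCoeff_apply]

theorem coeff_coe_trunc_sub (α γ : PowerSeries R) (h m : ℕ) :
    coeff m ((trunc h α : PowerSeries R) - γ) =
      if m < h then -coeff m (γ - α) else -coeff m γ := by
  rw [map_sub, map_sub, Polynomial.coeff_coe, coeff_trunc]
  split_ifs <;> ring

end PowerSeries

open Polynomial

section BallChart

variable {R : Type*} [CommRing R]

/-- The substitution `X = λ + z y^h` attached to the pseudo-ball `B(α, h)`, where `λ` is the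
truncation of `α` below `h`; here `z` is the variable `X`. -/
noncomputable def ballChart (α : PowerSeries R) (h : ℕ) : (PowerSeries R)[X] :=
  C (PowerSeries.trunc h α : PowerSeries R) + C (PowerSeries.X ^ h) * X

theorem derivative_ballChart (α : PowerSeries R) (h : ℕ) :
    derivative (ballChart α h) = C (PowerSeries.X ^ h) := by
  rw [ballChart, derivative_add, derivative_C, derivative_C_mul_X, zero_add]

theorem X_sub_C_comp_ballChart (α γ : PowerSeries R) (h : ℕ) :
    (X - C γ).comp (ballChart α h) =
      C (PowerSeries.X ^ h) * X + C ((PowerSeries.trunc h α : PowerSeries R) - γ) := by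
  rw [ballChart, sub_comp, X_comp, C_comp, C_sub]
  ring

theorem exists_hasInitialForm_X_sub_C_comp_ballChart [IsDomain R] (α γ : PowerSeries R) (h : ℕ) :
    ∃ n, ∃ u ≠ (0 : R), HasInitialForm ((X - C γ).comp (ballChart α h)) n
      (if (h : ℕ∞) ≤ (γ - α).order then X - C (PowerSeries.coeff h γ) else C u) := by
  rw [X_sub_C_comp_ballChart]
  split_ifs with hγ
  · obtain ⟨ψ, hψ, hψ0⟩ := PowerSeries.exists_eq_X_pow_mul_of_coeff_eq_zero
      (φ := (PowerSeries.trunc h α : PowerSeries R) - γ) (n := h) fun m hm => by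
        rw [PowerSeries.coeff_coe_trunc_sub, if_pos hm,
          PowerSeries.coeff_of_lt_order m (lt_of_lt_of_le (by exact_mod_cast hm) hγ), neg_zero]
    refine ⟨h, 1, one_ne_zero, X + C ψ, by rw [hψ, C_mul]; ring, ?_⟩
    rw [Polynomial.map_add, map_X, map_C, hψ0, PowerSeries.coeff_coe_trunc_sub,
      if_neg (lt_irrefl h), map_neg, ← sub_eq_add_neg]
  · obtain ⟨o, ho⟩ := ENat.ne_top_iff_exists.1 (ne_top_of_lt (not_le.1 hγ))
    have hoh : o < h := by exact_mod_cast ho ▸ not_le.1 hγ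
    obtain ⟨hoc, hlt⟩ := PowerSeries.order_eq_nat.1 ho.symm
    obtain ⟨ψ, hψ, hψ0⟩ := PowerSeries.exists_eq_X_pow_mul_of_coeff_eq_zero
      (φ := (PowerSeries.trunc h α : PowerSeries R) - γ) (n := o) fun m hm => by
        rw [PowerSeries.coeff_coe_trunc_sub, if_pos (hm.trans hoh), hlt m hm, neg_zero]
    refine ⟨o, PowerSeries.constantCoeff ψ, ?_, C (PowerSeries.X ^ (h - o)) * X + C ψ, ?_, ?_⟩
    · rwa [hψ0, PowerSeries.coeff_coe_trunc_sub, if_pos hoh, neg_ne_zero]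
    · rw [hψ, ← pow_mul_pow_sub _ hoh.le, C_mul, C_mul]
      ring
    · rw [Polynomial.map_add, Polynomial.map_mul, map_X, map_C, map_C, map_pow,
        PowerSeries.constantCoeff_X, zero_pow (by omega), C_0, zero_mul, zero_add]

theorem exists_hasInitialForm_prod_X_sub_C_comp_ballChart [IsDomain R] {ι : Type*} [Fintype ι]
    (α : PowerSeries R) (γ : ι → PowerSeries R) (h : ℕ) :
    ∃ n, ∃ c ≠ (0 : R), HasInitialForm ((∏ i, (X - C (γ i))).comp (ballChart α h)) n
      (C c * ∏ i with (h : ℕ∞) ≤ (γ i - α).order, (X - C (PowerSeries.coeff h (γ i)))) := by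
  choose n u hu hF using fun i => exists_hasInitialForm_X_sub_C_comp_ballChart α (γ i) h
  refine ⟨∑ i, n i, ∏ i with ¬(h : ℕ∞) ≤ (γ i - α).order, u i,
    Finset.prod_ne_zero_iff.2 fun i _ => hu i, ?_⟩
  have hprod := HasInitialForm.prod (s := Finset.univ) fun i _ => hF i
  rw [Finset.prod_ite, ← map_prod, ← prod_comp] at hprod
  convert hprod using 1
  exact mul_comm _ _

end BallChart

theorem exists_derivative_prod_X_sub_C_eq_C_mul {K ι κ : Type*} [Field K] [CharZero K]
    (s : Finset ι) (t : Finset κ) (a : ι → K) (b : κ → K) {c₀ c₁ : K} (hc₀ : c₀ ≠ 0)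
    (hc₁ : c₁ ≠ 0)
    (hab : C c₀ * derivative (∏ i ∈ s, (X - C (a i))) = C c₁ * ∏ j ∈ t, (X - C (b j))) :
    ∃ c ≠ 0, derivative (∏ i ∈ s, (X - C (a i))) = C c * ∏ j ∈ t, (X - C (b j)) ∧
      t.card = s.card - 1 := by
  have hc : c₁ / c₀ ≠ 0 := div_ne_zero hc₁ hc₀
  have hder : derivative (∏ i ∈ s, (X - C (a i))) = C (c₁ / c₀) * ∏ j ∈ t, (X - C (b j)) := by
    apply mul_left_cancel₀ (C_ne_zero.2 hc₀)
    rw [hab, ← mul_assoc, ← C_mul, mul_div_cancel₀ _ hc₀]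
  refine ⟨c₁ / c₀, hc, hder, ?_⟩
  rw [← natDegree_finsetProd_X_sub_C_eq_card t b, ← natDegree_C_mul hc, ← hder,
    natDegree_derivative, natDegree_finsetProd_X_sub_C_eq_card]

theorem stmt_2_general (p : ℕ) (α : Fin p → PowerSeries ℂ)
    (β : Fin (p - 1) → PowerSeries ℂ)
    (hder : Polynomial.derivative (∏ i, (Polynomial.X - Polynomial.C (α i)))
      = (p : Polynomial (PowerSeries ℂ)) * ∏ j, (Polynomial.X - Polynomial.C (β j)))
    (k : Fin p) (h : ℕ)
    (S : Finset (Fin p)) (hS : S = Finset.univ.filter fun i => (h : ℕ∞) ≤ (α i - α k).order)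
    (T : Finset (Fin (p - 1)))
    (hT : T = Finset.univ.filter fun j => (h : ℕ∞) ≤ (β j - α k).order) :
    ∃ c : ℂ, c ≠ 0 ∧
      Polynomial.derivative
          (∏ i ∈ S, (Polynomial.X - Polynomial.C (PowerSeries.coeff h (α i))))
        = Polynomial.C c *
            ∏ j ∈ T, (Polynomial.X - Polynomial.C (PowerSeries.coeff h (β j))) ∧
      T.card = S.card - 1 := by
  obtain ⟨M, c₀, hc₀, hF⟩ := exists_hasInitialForm_prod_X_sub_C_comp_ballChart (α k) α h
  obtain ⟨N, c₁, hc₁, hG⟩ := exists_hasInitialForm_prod_X_sub_C_comp_ballChart (α k) β h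
  rw [← hS] at hF
  rw [← hT] at hG
  have hp : (p : ℂ) ≠ 0 := Nat.cast_ne_zero.2 k.pos.ne'
  have hF' := hF.derivative
  rw [derivative_comp, hder, mul_comp, natCast_comp, ← map_natCast C, derivative_ballChart]
    at hF'
  have hG' := (hasInitialForm_C_X_pow h).mul ((hasInitialForm_C (p : PowerSeries ℂ)).mul hG)
  rw [one_mul, map_natCast PowerSeries.constantCoeff, ← mul_assoc (C (p : ℂ)), ← C_mul] at hG'
  have hdS : derivative (∏ i ∈ S, (X - C (PowerSeries.coeff h (α i)))) ≠ 0 := by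
    rw [Ne, derivative_eq_zero, natDegree_finsetProd_X_sub_C_eq_card]
    exact Finset.card_ne_zero_of_mem (show k ∈ S by simp [hS])
  have key := hF'.unique hG' (by rw [derivative_C_mul]; exact mul_ne_zero (C_ne_zero.2 hc₀) hdS)
    (mul_ne_zero (C_ne_zero.2 (mul_ne_zero hp hc₁)) (monic_prod_X_sub_C _ T).ne_zero)
  rw [derivative_C_mul] at key
  exact exists_derivative_prod_X_sub_C_eq_C_mul S T _ _ hc₀ (mul_ne_zero hp hc₁) key

/-- Lemma 1 of the paper: with `S = {i : O(α_i, α_k) ≥ h}` and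
`T = {j : O(β_j, α_k) ≥ h}`, the derivative of `∏_{i ∈ S} (z - coeff_h α_i)` is a nonzero
constant multiple of `∏_{j ∈ T} (z - coeff_h β_j)`; in particular `#T = #S - 1`. -/
theorem stmt_2 (p : ℕ) (hp : 2 ≤ p) (α : Fin p → PowerSeries ℂ)
    (β : Fin (p - 1) → PowerSeries ℂ)
    (hder : Polynomial.derivative (∏ i, (Polynomial.X - Polynomial.C (α i)))
      = (p : Polynomial (PowerSeries ℂ)) * ∏ j, (Polynomial.X - Polynomial.C (β j)))
    (k : Fin p) (h : ℕ) (hh : 0 < h)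
    (S : Finset (Fin p)) (hS : S = Finset.univ.filter fun i => (h : ℕ∞) ≤ (α i - α k).order)
    (T : Finset (Fin (p - 1)))
    (hT : T = Finset.univ.filter fun j => (h : ℕ∞) ≤ (β j - α k).order) :
    ∃ c : ℂ, c ≠ 0 ∧
      Polynomial.derivative
          (∏ i ∈ S, (Polynomial.X - Polynomial.C (PowerSeries.coeff h (α i))))
        = Polynomial.C c *
            ∏ j ∈ T, (Polynomial.X - Polynomial.C (PowerSeries.coeff h (β j))) ∧
      T.card = S.card - 1 :=
  stmt_2_general p α β hder k h S hS T hT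
end

section
/- Let p ≥ 1 and let α_1, …, α_p ∈ ℂ[[y]]. Let h < h' be positive integers and let k, k' ∈ {1,…,p} be indices with O(α_k, α_{k'}) ≥ h. Then Σ_{i=1}^p min(h, O(α_k, α_i)) < Σ_{i=1}^p min(h', O(α_{k'}, α_i)), where the minima are taken in ℕ ∪ {∞} with min(h, ∞) = h. -/
/-!
Truncated contact orders are constant on pseudo-balls: if `O(α_k, α_{k'}) ≥ h`, the
ultrametric inequality gives `min(h, O(α_k, α_i)) ≤ min(h, O(α_{k'}, α_i))` for every `i`.
Raising the radius to `h'` can only increase each summand, and the summand `i = k'` grows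
strictly, from `h` to `h'`; all summands are finite, so the sums compare strictly.
-/

open Finset

namespace ENat

theorem sum_lt_sum_of_le_of_exists_lt {ι : Type*} {s : Finset ι} {f g : ι → ℕ∞}
    (hle : ∀ i ∈ s, f i ≤ g i) (hlt : ∃ i ∈ s, f i < g i) (hg : ∀ i ∈ s, g i ≠ ⊤) :
    ∑ i ∈ s, f i < ∑ i ∈ s, g i := by
  classical
  obtain ⟨j, hj, hfg⟩ := hlt
  rw [← add_sum_erase s f hj, ← add_sum_erase s g hj]
  calc f j + ∑ i ∈ s.erase j, f i
      ≤ f j + ∑ i ∈ s.erase j, g i :=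
        add_le_add_right (sum_le_sum fun i hi => hle i (mem_of_mem_erase hi)) _
    _ < g j + ∑ i ∈ s.erase j, g i :=
        WithTop.add_lt_add_right (sum_ne_top.2 fun i hi => hg i (mem_of_mem_erase hi)) hfg

end ENat

namespace PowerSeries

theorem min_order_sub_le_of_le_order_sub {R : Type*} [Ring R] {a b c : R⟦X⟧} {h : ℕ∞}
    (hab : h ≤ (a - b).order) : min h (a - c).order ≤ min h (b - c).order := by
  have hba : h ≤ (b - a).order := by rwa [← neg_sub, order_neg]
  have hultra : min (b - a).order (a - c).order ≤ (b - c).order := by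
    simpa only [sub_add_sub_cancel] using min_order_le_order_add (b - a) (a - c)
  exact le_min (min_le_left _ _) ((min_le_min_right _ hba).trans hultra)

end PowerSeries

theorem stmt_4_general (p : ℕ) (α : Fin p → PowerSeries ℂ)
    (h h' : ℕ) (hlt : h < h') (k k' : Fin p)
    (hcontact : (h : ℕ∞) ≤ (α k - α k').order) :
    (∑ i, min (h : ℕ∞) ((α k - α i).order)) < ∑ i, min (h' : ℕ∞) ((α k' - α i).order) := by
  have hh' : (h : ℕ∞) < h' := by exact_mod_cast hlt
  refine ENat.sum_lt_sum_of_le_of_exists_lt (fun i _ => ?_) ⟨k', mem_univ k', ?_⟩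
    (fun i _ => ne_top_of_le_ne_top (ENat.natCast_ne_top h') (min_le_left _ _))
  · exact (PowerSeries.min_order_sub_le_of_le_order_sub hcontact).trans
      (min_le_min_right _ hh'.le)
  · simpa [min_eq_left hcontact] using hh'

/-- Lemma 3 of the paper: if the pseudo-ball `B' = B(α_{k'}, h')` is strictly contained
in `B = B(α_k, h)`, then `q(B) < q(B')`. -/
theorem stmt_4 (p : ℕ) (hp : 1 ≤ p) (α : Fin p → PowerSeries ℂ)
    (h h' : ℕ) (hh : 0 < h) (hlt : h < h') (k k' : Fin p)
    (hcontact : (h : ℕ∞) ≤ (α k - α k').order) :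
    (∑ i, min (h : ℕ∞) ((α k - α i).order)) < ∑ i, min (h' : ℕ∞) ((α k' - α i).order) :=
  stmt_4_general p α h h' hlt k k' hcontact
end

section
/- Let F ∈ ℂ[z] be a nonconstant polynomial having exactly k distinct complex roots. Then F has at most k − 1 distinct nonzero critical values; that is, the set {F(w) : w ∈ ℂ, F'(w) = 0, F(w) ≠ 0} has cardinality at most k − 1. -/
open Polynomial

/-- A nonconstant complex polynomial with exactly `k` distinct roots has at most
`k - 1` distinct nonzero critical values. -/
theorem stmt_8 (F : Polynomial ℂ) (hF : 0 < F.natDegree) (k : ℕ)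
    (hk : F.roots.toFinset.card = k) :
    {t : ℂ | ∃ w : ℂ, F.derivative.eval w = 0 ∧ F.eval w = t ∧ t ≠ 0}.ncard ≤ k - 1 := by
  classical
  have hF0 : F ≠ 0 := fun h => by simp [h] at hF
  set n := F.natDegree with hn
  have hd0 : F.derivative ≠ 0 := fun h =>
    hF.ne' (natDegree_eq_zero_of_derivative_eq_zero h)
  have hdn : F.derivative.natDegree = n - 1 :=
    natDegree_eq_of_degree_eq_some (degree_derivative_eq F hF)
  have hroots : F.roots.card = n :=
    splits_iff_card_roots.mp (IsAlgClosed.splits F)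
  have hdroots : F.derivative.roots.card = n - 1 := by
    rw [splits_iff_card_roots.mp (IsAlgClosed.splits F.derivative), hdn]
  set Fr := F.roots.toFinset with hFr
  set T := F.derivative.roots.toFinset with hT
  have hsumT : ∑ a ∈ T, F.derivative.roots.count a = n - 1 := by
    rw [Multiset.toFinset_sum_count_eq, hdroots]
  have hsplit : ∑ a ∈ T ∩ Fr, F.derivative.roots.count a
        + ∑ a ∈ T \ Fr, F.derivative.roots.count a
      = ∑ a ∈ T, F.derivative.roots.count a :=
    Finset.sum_inter_add_sum_sdiff T Fr _
  -- the sum over T ∩ Fr equals the sum over Fr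
  have hA : ∑ a ∈ T ∩ Fr, F.derivative.roots.count a
      = ∑ a ∈ Fr, F.derivative.roots.count a := by
    refine Finset.sum_subset Finset.inter_subset_right ?_
    intro a _ ha
    have : a ∉ T := fun h => ha (Finset.mem_inter.mpr ⟨h, by
      simp_all [Finset.mem_inter]⟩)
    rw [hT, Multiset.mem_toFinset] at this
    exact Multiset.count_eq_zero.mpr this
  -- for a ∈ Fr, the multiplicity in the derivative is mult in F minus one
  have hmul : ∀ a ∈ Fr, F.derivative.roots.count a = F.roots.count a - 1 := by
    intro a ha
    rw [hFr, Multiset.mem_toFinset, mem_roots hF0] at ha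
    rw [count_roots, count_roots, derivative_rootMultiplicity_of_root ha]
  have hone : ∀ a ∈ Fr, 1 ≤ F.roots.count a := by
    intro a ha
    rw [hFr, Multiset.mem_toFinset] at ha
    exact Multiset.one_le_count_iff_mem.mpr ha
  have hAval : ∑ a ∈ Fr, F.derivative.roots.count a + k = n := by
    have : ∑ a ∈ Fr, (F.derivative.roots.count a + 1) = n := by
      rw [Finset.sum_congr rfl fun a ha => by
        rw [hmul a ha, Nat.sub_add_cancel (hone a ha)]]
      rw [Multiset.toFinset_sum_count_eq, hroots]
    rw [Finset.sum_add_distrib, Finset.sum_const, smul_eq_mul, mul_one, hk] at this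
    exact this
  -- each element of T \ Fr contributes at least 1
  have hB : (T \ Fr).card ≤ ∑ a ∈ T \ Fr, F.derivative.roots.count a := by
    calc (T \ Fr).card = ∑ _a ∈ T \ Fr, 1 := by simp
    _ ≤ _ := Finset.sum_le_sum fun a ha => by
        have := Finset.mem_sdiff.mp ha |>.1
        rw [hT, Multiset.mem_toFinset] at this
        exact Multiset.one_le_count_iff_mem.mpr this
  have hcard : (T \ Fr).card ≤ k - 1 := by omega
  -- the set of nonzero critical values is contained in the image of T \ Fr
  have hsub : {t : ℂ | ∃ w : ℂ, F.derivative.eval w = 0 ∧ F.eval w = t ∧ t ≠ 0}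
      ⊆ ((T \ Fr).image F.eval : Finset ℂ) := by
    rintro t ⟨w, hw1, hw2, hw3⟩
    refine Finset.mem_coe.mpr (Finset.mem_image.mpr ⟨w, ?_, hw2⟩)
    refine Finset.mem_sdiff.mpr ⟨?_, ?_⟩
    · rw [hT, Multiset.mem_toFinset, mem_roots hd0]
      exact hw1
    · rw [hFr, Multiset.mem_toFinset, mem_roots hF0]
      intro h
      exact hw3 (hw2 ▸ h)
  calc {t : ℂ | ∃ w : ℂ, F.derivative.eval w = 0 ∧ F.eval w = t ∧ t ≠ 0}.ncard
      ≤ (((T \ Fr).image F.eval : Finset ℂ) : Set ℂ).ncard :=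
        Set.ncard_le_ncard hsub (Set.Finite.ofFinset _ fun _ => Iff.rfl)
    _ = ((T \ Fr).image F.eval).card := Set.ncard_coe_finset _
    _ ≤ (T \ Fr).card := Finset.card_image_le
    _ ≤ k - 1 := hcard
end

section
/- Let G ∈ ℂ[z] be a nonconstant polynomial having exactly k distinct complex roots, let n be a positive integer, and let F(z) = G(z^n). Then F has at most k distinct nonzero critical values; that is, the set {F(w) : w ∈ ℂ, F'(w) = 0, F(w) ≠ 0} has cardinality at most k. -/
open Polynomial

/-- If `G` is a nonconstant polynomial with exactly `k` distinct roots and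
`F(z) = G(z^n)`, then `F` has at most `k` distinct nonzero critical values. -/
theorem stmt_9 (G : Polynomial ℂ) (hG : 0 < G.natDegree) (k : ℕ)
    (hk : G.roots.toFinset.card = k) (n : ℕ) (hn : 0 < n) (F : Polynomial ℂ)
    (hF : F = G.comp (Polynomial.X ^ n)) :
    {t : ℂ | ∃ w : ℂ, F.derivative.eval w = 0 ∧ F.eval w = t ∧ t ≠ 0}.ncard ≤ k := by
  have hG0 : G ≠ 0 := fun h => by simp [h] at hG
  have hG' : derivative G ≠ 0 := fun h =>
    absurd (natDegree_eq_zero_of_derivative_eq_zero h) hG.ne'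
  set d := G.natDegree with hd
  -- card of roots
  have hcardG : G.roots.card = d :=
    (splits_iff_card_roots.mp (IsAlgClosed.splits G))
  have hdeg' : (derivative G).natDegree = d - 1 := by
    have := degree_derivative_eq G hG
    exact natDegree_eq_of_degree_eq_some this
  have hcardG' : (derivative G).roots.card = d - 1 := by
    rw [splits_iff_card_roots.mp (IsAlgClosed.splits (derivative G)), hdeg']
  set T := G.roots.toFinset with hT
  -- sum of multiplicities of roots of G over T equals d
  have hsumG : ∑ r ∈ T, G.rootMultiplicity r = d := by
    have := Multiset.toFinset_sum_count_eq G.roots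
    simpa [count_roots, hcardG] using this
  -- sum over T of counts in G' roots equals d - k
  have hsumG' : ∑ r ∈ T, (derivative G).roots.count r = d - k := by
    have h1 : ∀ r ∈ T, (derivative G).roots.count r = G.rootMultiplicity r - 1 := by
      intro r hr
      rw [count_roots, derivative_rootMultiplicity_of_root]
      exact isRoot_of_mem_roots (Multiset.mem_toFinset.mp hr)
    have h2 : ∀ r ∈ T, 1 ≤ G.rootMultiplicity r := by
      intro r hr
      exact (rootMultiplicity_pos hG0).mpr (isRoot_of_mem_roots (Multiset.mem_toFinset.mp hr))
    have : (∑ r ∈ T, (derivative G).roots.count r) + k = d := by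
      rw [← hk, hT, ← hsumG, Finset.card_eq_sum_ones, ← Finset.sum_add_distrib]
      exact Finset.sum_congr rfl fun r hr => by
        rw [h1 r hr, Nat.sub_add_cancel (h2 r hr)]
    omega
  -- roots of G' not roots of G: at most k - 1
  set S : Finset ℂ := (derivative G).roots.toFinset \ T with hS
  have hScard : S.card ≤ k - 1 := by
    have hsub : ∑ r ∈ S, (derivative G).roots.count r
        + ∑ r ∈ T, (derivative G).roots.count r ≤ d - 1 := by
      rw [← hcardG', ← Multiset.toFinset_sum_count_eq (derivative G).roots]
      have hT2 : ∑ r ∈ T, (derivative G).roots.count r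
          = ∑ r ∈ T ∩ (derivative G).roots.toFinset, (derivative G).roots.count r := by
        refine (Finset.sum_subset (Finset.inter_subset_left) ?_).symm
        intro x hx hx2
        by_contra h
        exact hx2 (Finset.mem_inter.mpr ⟨hx, Multiset.mem_toFinset.mpr
          ((Multiset.count_pos).mp (Nat.pos_of_ne_zero h))⟩)
      rw [hT2]
      have hdisj : Disjoint S (T ∩ (derivative G).roots.toFinset) := by
        refine Finset.disjoint_left.mpr fun x hx hx2 => ?_
        exact (Finset.mem_sdiff.mp hx).2 (Finset.mem_inter.mp hx2).1
      rw [← Finset.sum_union hdisj]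
      refine Finset.sum_le_sum_of_subset fun x hx => ?_
      rcases Finset.mem_union.mp hx with h | h
      · exact (Finset.mem_sdiff.mp h).1
      · exact (Finset.mem_inter.mp h).2
    have hone : S.card ≤ ∑ r ∈ S, (derivative G).roots.count r := by
      rw [Finset.card_eq_sum_ones]
      refine Finset.sum_le_sum fun r hr => ?_
      exact Multiset.count_pos.mpr (Multiset.mem_toFinset.mp (Finset.mem_sdiff.mp hr).1)
    have hk1 : 1 ≤ k := by
      obtain ⟨z, hz⟩ := Complex.exists_root (natDegree_pos_iff_degree_pos.mp hG)
      have : z ∈ T := Multiset.mem_toFinset.mpr ((mem_roots hG0).mpr hz)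
      rw [← hk]; exact Finset.card_pos.mpr ⟨z, this⟩
    omega
  -- target finset
  set B : Finset ℂ := insert (G.eval 0) (S.image (fun c => G.eval c)) with hB
  have hBcard : B.card ≤ k := by
    have hk1 : 1 ≤ k := by
      obtain ⟨z, hz⟩ := Complex.exists_root (natDegree_pos_iff_degree_pos.mp hG)
      have : z ∈ T := Multiset.mem_toFinset.mpr ((mem_roots hG0).mpr hz)
      rw [← hk]; exact Finset.card_pos.mpr ⟨z, this⟩
    calc B.card ≤ (S.image (fun c => G.eval c)).card + 1 := Finset.card_insert_le _ _
      _ ≤ S.card + 1 := Nat.add_le_add_right Finset.card_image_le 1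
      _ ≤ (k - 1) + 1 := by omega
      _ = k := by omega
  -- the set is contained in B
  have hsubset : {t : ℂ | ∃ w : ℂ, F.derivative.eval w = 0 ∧ F.eval w = t ∧ t ≠ 0} ⊆ ↑B := by
    rintro t ⟨w, hw, hwt, ht⟩
    have hderiv : F.derivative = derivative (X ^ n) * (derivative G).comp (X ^ n) := by
      rw [hF, derivative_comp]
    rw [hderiv] at hw
    simp only [eval_mul, eval_comp, eval_pow, eval_X, derivative_X_pow, eval_mul, eval_natCast, eval_C,
      eval_pow, eval_X] at hw
    have hwt' : G.eval (w ^ n) = t := by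
      rw [hF] at hwt; simpa [eval_comp] using hwt
    rcases mul_eq_zero.mp hw with h | h
    · -- n * w^(n-1) = 0, so w = 0
      have hw0 : w = 0 := by
        have hn0 : (n : ℂ) ≠ 0 := Nat.cast_ne_zero.mpr hn.ne'
        rcases mul_eq_zero.mp h with h' | h'
        · exact absurd h' hn0
        · exact (pow_eq_zero_iff'.mp h').1
      subst hw0
      have : t = G.eval 0 := by rw [← hwt', zero_pow hn.ne']
      simp [hB, this]
    · -- derivative G eval (w^n) = 0
      have hc : w ^ n ∈ S := by
        refine Finset.mem_sdiff.mpr ⟨Multiset.mem_toFinset.mpr ?_, ?_⟩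
        · exact (mem_roots hG').mpr h
        · intro hmem
          have := isRoot_of_mem_roots (Multiset.mem_toFinset.mp hmem)
          rw [IsRoot, hwt'] at this
          exact ht this
      refine Finset.mem_coe.mpr (Finset.mem_insert_of_mem ?_)
      exact Finset.mem_image.mpr ⟨w ^ n, hc, hwt'⟩
  calc {t : ℂ | ∃ w : ℂ, F.derivative.eval w = 0 ∧ F.eval w = t ∧ t ≠ 0}.ncard
      ≤ (↑B : Set ℂ).ncard := Set.ncard_le_ncard hsubset (B.finite_toSet)
    _ = B.card := Set.ncard_coe_finset B
    _ ≤ k := hBcard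
end

section
/- Let k be a positive integer and define the polynomial function f : ℂ² → ℂ by f(x, y) = ((x^k − 1)²·y − x)² + x^{k+1}/(k+1) − x. Then f has no critical points in ℂ²; that is, for every (x, y) ∈ ℂ², the pair of partial derivatives (∂f/∂x (x,y), ∂f/∂y (x,y)) is not (0, 0). -/
/-- The polynomial `f(x,y) = ((x^k - 1)^2 y - x)^2 + x^(k+1)/(k+1) - x` has no
critical points in `ℂ²`. -/
theorem stmt_11 (k : ℕ) (hk : 0 < k)
    (f : ℂ → ℂ → ℂ)
    (hf : ∀ x y : ℂ, f x y = ((x ^ k - 1) ^ 2 * y - x) ^ 2 + x ^ (k + 1) / (k + 1) - x) :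
    ∀ x y : ℂ, ¬ (deriv (fun x' => f x' y) x = 0 ∧ deriv (fun y' => f x y') y = 0) := by
  intro x y ⟨h1, h2⟩
  have hfx : (fun x' => f x' y) = fun x' => ((x' ^ k - 1) ^ 2 * y - x') ^ 2 + x' ^ (k + 1) / (k + 1) - x' := by
    funext x'; rw [hf]
  have hfy : (fun y' => f x y') = fun y' => ((x ^ k - 1) ^ 2 * y' - x) ^ 2 + x ^ (k + 1) / (k + 1) - x := by
    funext y'; rw [hf]
  rw [hfx] at h1
  rw [hfy] at h2
  set A : ℂ := x ^ k - 1 with hA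
  set u : ℂ := A ^ 2 * y - x with hu
  -- derivative in y
  have hy : HasDerivAt (fun y' => (A ^ 2 * y' - x) ^ 2 + x ^ (k + 1) / (k + 1) - x)
      ((2:ℕ) * (A ^ 2 * y - x) ^ 1 * (A ^ 2 * 1)) y := by
    exact ((((hasDerivAt_id y).const_mul (A ^ 2)).sub_const x).pow 2).add_const _ |>.sub_const x
  have h2' : (2:ℂ) * u * A ^ 2 = 0 := by
    have := hy.deriv
    rw [h2] at this
    push_cast at this
    rw [hu]
    linear_combination -this
  -- derivative in x
  have hAx : HasDerivAt (fun x' : ℂ => x' ^ k - 1) ((k:ℂ) * x ^ (k - 1)) x :=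
    (hasDerivAt_pow k x).sub_const 1
  have hin : HasDerivAt (fun x' : ℂ => (x' ^ k - 1) ^ 2 * y - x')
      (((2:ℕ) * (x ^ k - 1) ^ 1 * ((k:ℂ) * x ^ (k - 1))) * y - 1) x :=
    ((hAx.pow 2).mul_const y).sub (hasDerivAt_id x)
  have hx : HasDerivAt (fun x' => ((x' ^ k - 1) ^ 2 * y - x') ^ 2 + x' ^ (k + 1) / (k + 1) - x')
      ((2:ℕ) * ((x ^ k - 1) ^ 2 * y - x) ^ 1 * (((2:ℕ) * (x ^ k - 1) ^ 1 * ((k:ℂ) * x ^ (k - 1))) * y - 1)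
        + ((k + 1 : ℕ) : ℂ) * x ^ k / (k + 1) - 1) x := by
    have hp : HasDerivAt (fun x' : ℂ => x' ^ (k + 1) / (k + 1)) (((k + 1 : ℕ) : ℂ) * x ^ k / (k + 1)) x := by
      simpa using (hasDerivAt_pow (k + 1) x).div_const ((k : ℂ) + 1)
    exact ((hin.pow 2).add hp).sub (hasDerivAt_id x)
  have hk1 : ((k : ℂ) + 1) ≠ 0 := by
    have : (0:ℝ) < (k:ℝ) + 1 := by positivity
    exact_mod_cast Complex.ofReal_ne_zero.mpr this.ne'
  have h1' : 2 * u * (2 * A * ((k:ℂ) * x ^ (k - 1)) * y - 1) + A = 0 := by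
    have := hx.deriv
    rw [h1] at this
    push_cast at this
    have hsimp : ((k:ℂ) + 1) * x ^ k / ((k:ℂ) + 1) = x ^ k := by
      field_simp
    rw [hsimp] at this
    rw [hu, hA]
    linear_combination -this
  -- case analysis
  rcases mul_eq_zero.mp h2' with h | hA0
  · rcases mul_eq_zero.mp h with h2ne | hu0
    · norm_num at h2ne
    · -- u = 0, so A = 0 from h1'
      rw [hu0] at h1'
      simp at h1'
      have hx0 : x = 0 := by
        rw [hu, h1'] at hu0
        simpa using hu0
      rw [hA, hx0] at h1'
      simp [zero_pow hk.ne'] at h1'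
  · -- A = 0
    have hA0' : A = 0 := pow_eq_zero_iff (n := 2) (by norm_num) |>.mp hA0
    have hu0 : u = 0 := by
      rw [hA0'] at h1'
      have : (-2 : ℂ) * u = 0 := by linear_combination h1'
      have h2ne : (-2 : ℂ) ≠ 0 := by norm_num
      exact (mul_eq_zero.mp this).resolve_left h2ne
    have hx0 : x = 0 := by
      rw [hu, hA0'] at hu0
      simpa using hu0
    rw [hA, hx0] at hA0'
    simp [zero_pow hk.ne'] at hA0'
end
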